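/- arXiv:2007.09026 — 5 statements merged into one kernel-verified Lean document; each statement's English description precedes it below -/
import Mathlib

section
/- The semi-discrete split-form scheme for Burgers equation on a periodic grid, (u_i)_t + α(u_{i+1}²/2 - u_{i-1}²/2)/(2h) + (1-α)·u_i·(u_{i+1}-u_{i-1})/(2h) = 0, is conservative: it can be written in finite volume form (u_i)_t + (f^α_{i+1/2} - f^α_{i-1/2})/h = 0 with the flux f^α(u_i,u_{i+1}) = (f(u_i)+f(u_{i+1}))/2 - (1-α)(u_{i+1}-u_i)²/4. -/
/-- The split-form semi-discretization of Burgers equation on a periodic grid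
is conservative: the split-form spatial operator equals the flux-difference
form with the two-point flux
`f^α(a,b) = (f(a)+f(b))/2 − (1−α)(b−a)²/4`. -/
theorem burgers_split_form_is_conservative
    (N : ℕ) [NeZero N] (u : ZMod N → ℝ) (h α : ℝ) (hh : 0 < h)
    (f : ℝ → ℝ) (hf : ∀ v, f v = v ^ 2 / 2)
    (fα : ℝ → ℝ → ℝ)
    (hfα : ∀ a b, fα a b = (f a + f b) / 2 - (1 - α) * (b - a) ^ 2 / 4) :
    ∀ i : ZMod N,
      α * ((u (i + 1)) ^ 2 / 2 - (u (i - 1)) ^ 2 / 2) / (2 * h)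
        + (1 - α) * u i * (u (i + 1) - u (i - 1)) / (2 * h)
      = (fα (u i) (u (i + 1)) - fα (u (i - 1)) (u i)) / h := by
  intro i
  simp only [hfα, hf]
  field_simp
  ring
end

section
/- For the skew-symmetric split (α = 2/3) of the Burgers equation on a periodic grid, the discrete L² norm is exactly conserved: if (u_i)_t + (2/3)·(u_{i+1}²/2 − u_{i-1}²/2)/(2h) + (1/3)·u_i·(u_{i+1}−u_{i-1})/(2h) = 0 for all i with periodic indexing, then d/dt Σ_i h·u_i² = 0. -/
/-! The energy density `h uᵢ²` evolves in conservation form: the α = 2/3 split is exactly the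
one for which `2 uᵢ u̇ᵢ` is a difference `-(F(uᵢ, uᵢ₊₁) - F(uᵢ₋₁, uᵢ)) / (3h)` of the numerical
energy flux `F(v, w) = v w (v + w)`, and flux differences sum to zero over a periodic grid. -/

theorem sum_flux_sub_eq_zero {G M : Type*} [AddGroup G] [Fintype G] [AddCommGroup M]
    (F : G → G → M) (a : G) : ∑ i, (F i (i + a) - F (i - a) i) = 0 := by
  rw [Finset.sum_sub_distrib, sub_eq_zero]
  exact Fintype.sum_equiv (Equiv.addRight a) _ _ fun i => by simp

noncomputable def burgersSkewRHS (h uPrev u uNext : ℝ) : ℝ :=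
  -((2 / 3) * (uNext ^ 2 / 2 - uPrev ^ 2 / 2) / (2 * h) + (1 / 3) * u * (uNext - uPrev) / (2 * h))

def burgersEnergyFlux (v w : ℝ) : ℝ := v * w * (v + w)

theorem two_mul_mul_burgersSkewRHS (h uPrev u uNext : ℝ) :
    2 * u * burgersSkewRHS h uPrev u uNext
      = -(1 / (3 * h)) * (burgersEnergyFlux u uNext - burgersEnergyFlux uPrev u) := by
  unfold burgersSkewRHS burgersEnergyFlux
  ring

theorem burgers_skew_symmetric_discrete_L2_conserved_general
    (N : ℕ) [NeZero N] (h : ℝ)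
    (u : ℝ → ZMod N → ℝ)
    (hode : ∀ (t : ℝ) (i : ZMod N),
      HasDerivAt (fun s => u s i)
        (-((2 / 3) * ((u t (i + 1)) ^ 2 / 2 - (u t (i - 1)) ^ 2 / 2) / (2 * h)
            + (1 / 3) * u t i * (u t (i + 1) - u t (i - 1)) / (2 * h))) t) :
    ∀ t : ℝ,
      HasDerivAt (fun s => ∑ i : ZMod N, h * (u s i) ^ 2) 0 t := by
  intro t
  have hode' (i : ZMod N) :
      HasDerivAt (fun s => u s i) (burgersSkewRHS h (u t (i - 1)) (u t i) (u t (i + 1))) t :=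
    hode t i
  have henergy : HasDerivAt (fun s => ∑ i : ZMod N, h * (u s i) ^ 2)
      (∑ i, h * (2 * u t i * burgersSkewRHS h (u t (i - 1)) (u t i) (u t (i + 1)))) t :=
    HasDerivAt.fun_sum fun i _ => by simpa using ((hode' i).fun_pow 2).const_mul h
  have hflux := sum_flux_sub_eq_zero (fun i j => burgersEnergyFlux (u t i) (u t j)) (1 : ZMod N)
  have hrate :
      ∑ i, h * (2 * u t i * burgersSkewRHS h (u t (i - 1)) (u t i) (u t (i + 1))) = 0 := by
    simp_rw [two_mul_mul_burgersSkewRHS, mul_left_comm h, ← Finset.mul_sum, hflux, mul_zero]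
  rwa [hrate] at henergy

/-- Discrete L² conservation for the skew-symmetric split (α = 2/3) of the
Burgers equation on a periodic grid: if the grid values satisfy the
skew-symmetric split-form ODE system, then `d/dt Σᵢ h uᵢ² = 0`. -/
theorem burgers_skew_symmetric_discrete_L2_conserved
    (N : ℕ) [NeZero N] (h : ℝ) (hh : 0 < h)
    (u : ℝ → ZMod N → ℝ)
    (hode : ∀ (t : ℝ) (i : ZMod N),
      HasDerivAt (fun s => u s i)
        (-((2 / 3) * ((u t (i + 1)) ^ 2 / 2 - (u t (i - 1)) ^ 2 / 2) / (2 * h)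
            + (1 / 3) * u t i * (u t (i + 1) - u t (i - 1)) / (2 * h))) t) :
    ∀ t : ℝ,
      HasDerivAt (fun s => ∑ i : ZMod N, h * (u s i) ^ 2) 0 t :=
  burgers_skew_symmetric_discrete_L2_conserved_general N h u hode
end

section
/- Summation-by-parts entropy estimate: if a two-point flux f* satisfies Tadmor's condition (w_{i+1} − w_i)·f*_{i+1/2} − (Ψ_{i+1} − Ψ_i) ≤ 0 at every interface of a periodic grid, and the scheme is (u_i)_t + (f*_{i+1/2} − f*_{i-1/2})/h = 0, then the total discrete entropy is non-increasing: d/dt Σ_i h·U(u_i) ≤ 0, where U is a convex entropy with entropy variable w = U', entropy flux F with U'f' = F', and Ψ = w·f − F. -/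
/-!
By the chain rule and summation by parts on the periodic grid, the rate of change of the total
entropy is the sum of the interface terms `(w_{i+1} - w_i) f*_{i+1/2}`. Tadmor's condition bounds
each of them by the jump `Ψ_{i+1} - Ψ_i`, and these jumps telescope to zero around the grid.
-/

open Finset

section PeriodicSums

variable {G M : Type*} [AddGroup G] [Fintype G]

theorem sum_shift_sub_eq_zero [AddCommGroup M] (g : G → M) (a : G) :
    ∑ i, (g (i + a) - g i) = 0 := by
  rw [sum_sub_distrib, sub_eq_zero]
  exact Equiv.sum_comp (Equiv.addRight a) g

theorem sum_le_zero_of_le_shift_sub [AddCommGroup M] [PartialOrder M] [IsOrderedAddMonoid M]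
    {x g : G → M} (a : G) (hle : ∀ i, x i ≤ g (i + a) - g i) : ∑ i, x i ≤ 0 :=
  (sum_le_sum fun i _ => hle i).trans_eq (sum_shift_sub_eq_zero g a)

theorem sum_mul_sub_shift_eq_neg_sum [Ring M] (w φ : G → M) (a : G) :
    ∑ i, w i * (φ i - φ (i - a)) = -∑ i, (w (i + a) - w i) * φ i := by
  have hshift : ∑ i, w i * φ (i - a) = ∑ i, w (i + a) * φ i := by
    rw [← Equiv.sum_comp (Equiv.addRight a)]
    simp
  simp only [mul_sub, sub_mul, sum_sub_distrib, hshift]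
  abel

end PeriodicSums

theorem hasDerivAt_sum_entropy {N : ℕ} [NeZero N] {h : ℝ} (hh : h ≠ 0) {U w : ℝ → ℝ}
    (hU : ∀ x, HasDerivAt U (w x) x) (fs : ℝ → ℝ → ℝ) {u : ℝ → ZMod N → ℝ} {t : ℝ}
    (hode : ∀ i, HasDerivAt (fun s => u s i)
      (-((fs (u t i) (u t (i + 1)) - fs (u t (i - 1)) (u t i)) / h)) t) :
    HasDerivAt (fun s => ∑ i, h * U (u s i))
      (∑ i, (w (u t (i + 1)) - w (u t i)) * fs (u t i) (u t (i + 1))) t := by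
  refine (HasDerivAt.fun_sum fun i _ => ((hU (u t i)).comp t (hode i)).const_mul h).congr_deriv ?_
  -- `i - 1 + 1` makes the flux difference literally `φ i - φ (i - 1)` for the summation by parts.
  have hflux : ∀ i : ZMod N, h * (w (u t i) *
      -((fs (u t i) (u t (i + 1)) - fs (u t (i - 1)) (u t i)) / h)) =
      -(w (u t i) * (fs (u t i) (u t (i + 1)) - fs (u t (i - 1)) (u t (i - 1 + 1)))) := by
    intro i
    rw [sub_add_cancel]
    field_simp
  simp only [hflux, sum_neg_distrib,
    sum_mul_sub_shift_eq_neg_sum (fun i => w (u t i)) (fun i => fs (u t i) (u t (i + 1))), neg_neg]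

theorem sbp_entropy_estimate_general
    (N : ℕ) [NeZero N] (h : ℝ) (hh : 0 < h)
    (U w Ψ : ℝ → ℝ)
    (hU : ∀ x, HasDerivAt U (w x) x)
    (fs : ℝ → ℝ → ℝ)
    (u : ℝ → ZMod N → ℝ)
    (htadmor : ∀ (t : ℝ) (i : ZMod N),
      (w (u t (i + 1)) - w (u t i)) * fs (u t i) (u t (i + 1))
        - (Ψ (u t (i + 1)) - Ψ (u t i)) ≤ 0)
    (hode : ∀ (t : ℝ) (i : ZMod N),
      HasDerivAt (fun s => u s i)
        (-((fs (u t i) (u t (i + 1)) - fs (u t (i - 1)) (u t i)) / h)) t) :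
    ∀ t : ℝ, deriv (fun s => ∑ i : ZMod N, h * U (u s i)) t ≤ 0 := by
  intro t
  rw [(hasDerivAt_sum_entropy hh.ne' hU fs (hode t)).deriv]
  exact sum_le_zero_of_le_shift_sub (g := fun i => Ψ (u t i)) 1 fun i => sub_nonpos.mp (htadmor t i)

/-- Summation-by-parts entropy estimate: if a two-point numerical flux `fs`
satisfies Tadmor's condition at every interface of a periodic grid, and the
scheme is the finite volume scheme `(uᵢ)ₜ + (f*_{i+1/2} − f*_{i-1/2})/h = 0`,
then the total discrete entropy `Σᵢ h U(uᵢ)` is non-increasing. Here `U` is a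
convex entropy with entropy variable `w = U'`, entropy flux `F` with
`U'·f' = F'`, and entropy potential `Ψ = w·f − F`. -/
theorem sbp_entropy_estimate
    (N : ℕ) [NeZero N] (h : ℝ) (hh : 0 < h)
    (U w F f Ψ : ℝ → ℝ)
    (hU : ∀ x, HasDerivAt U (w x) x)
    (hUconv : ConvexOn ℝ Set.univ U)
    (hcompat : ∀ x, w x * deriv f x = deriv F x)
    (hΨ : ∀ x, Ψ x = w x * f x - F x)
    (fs : ℝ → ℝ → ℝ)
    (u : ℝ → ZMod N → ℝ)
    (htadmor : ∀ (t : ℝ) (i : ZMod N),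
      (w (u t (i + 1)) - w (u t i)) * fs (u t i) (u t (i + 1))
        - (Ψ (u t (i + 1)) - Ψ (u t i)) ≤ 0)
    (hode : ∀ (t : ℝ) (i : ZMod N),
      HasDerivAt (fun s => u s i)
        (-((fs (u t i) (u t (i + 1)) - fs (u t (i - 1)) (u t i)) / h)) t) :
    ∀ t : ℝ, deriv (fun s => ∑ i : ZMod N, h * U (u s i)) t ≤ 0 :=
  sbp_entropy_estimate_general N h hh U w Ψ hU fs u htadmor hode
end

section
/- The Tadmor-modified dissipation coefficient R^TA_{i+1/2} = max((u_{i+1}−u_i)/6, 0) yields a flux f^TA = (f(u_i)+f(u_{i+1}))/2 − (1/2)R^TA(u_{i+1}−u_i) that satisfies Tadmor's entropy-dissipation inequality (w_{i+1}−w_i)·f^TA − (Ψ_{i+1}−Ψ_i) ≤ 0 for the quadratic entropy U(u)=u²/2 of the Burgers equation. -/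
/-- Tadmor's modified dissipation coefficient `R^TA = max((uᵢ₊₁−uᵢ)/6, 0)`
yields a flux satisfying Tadmor's entropy-dissipation inequality for the
quadratic entropy of the Burgers equation (`f(u)=u²/2`, `w(u)=u`,
`Ψ(u)=u³/6`). -/
theorem burgers_tadmor_modified_flux_entropy_dissipative
    (ui uip : ℝ) (f w Ψ : ℝ → ℝ)
    (hf : ∀ u, f u = u ^ 2 / 2)
    (hw : ∀ u, w u = u)
    (hΨ : ∀ u, Ψ u = u ^ 3 / 6)
    (RTA fTA : ℝ)
    (hR : RTA = max ((uip - ui) / 6) 0)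
    (hTA : fTA = (f ui + f uip) / 2 - (1 / 2) * RTA * (uip - ui)) :
    (w uip - w ui) * fTA - (Ψ uip - Ψ ui) ≤ 0 := by
  simp only [hf, hw, hΨ] at *
  rcases le_total ((uip - ui) / 6) 0 with h | h
  · rw [hR, max_eq_right h] at hTA
    nlinarith [sq_nonneg (uip - ui)]
  · rw [hR, max_eq_left h] at hTA
    nlinarith [sq_nonneg (uip - ui)]
end

section
/- The density-flux dissipation coefficient of Chandrashekar's entropy-conservative Euler flux relative to the central flux is indefinite: for grid states with ρ_i, ρ_{i+1} > 0, ρ_i ≠ ρ_{i+1}, one has the identity 2(⟨ρv⟩ − ρ^ln⟨v⟩)/(ρ_{i+1}−ρ_i) = (⟨ρ⟩ − ρ^ln)·2⟨v⟩/(ρ_{i+1}−ρ_i) + (v_{i+1}−v_i)/2, where ⟨·⟩ denotes the arithmetic mean and ρ^ln the logarithmic mean; moreover, if v_i = v_{i+1} = v̄ > 0 and ρ_{i+1} < ρ_i, then this coefficient is strictly negative. -/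
/-!
The identity is the covariance formula `⟨ρv⟩ − ⟨ρ⟩⟨v⟩ = (ρᵢ₊₁ − ρᵢ)(vᵢ₊₁ − vᵢ)/4`.
For constant velocity `v̄` it reduces the coefficient to `(⟨ρ⟩ − ρ^ln)·2v̄/(ρᵢ₊₁ − ρᵢ)`,
whose numerator is positive because the logarithmic mean lies strictly below the arithmetic
mean, while the denominator is negative.
-/

open Real

/-- The logarithmic mean; `logMean a a = 0` is a junk value. -/
noncomputable def logMean (a b : ℝ) : ℝ := (b - a) / (log b - log a)

lemma logMean_comm (a b : ℝ) : logMean a b = logMean b a := by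
  rw [logMean, logMean, ← neg_div_neg_eq, neg_sub, neg_sub]

/-- The first term of the series `log t = 2 ∑ₖ ((t-1)/(t+1))^(2k+1) / (2k+1)`. -/
lemma two_mul_sub_one_div_add_one_lt_log {t : ℝ} (ht : 1 < t) :
    2 * (t - 1) / (t + 1) < log t := by
  have hseries := hasSum_log_one_add (a := t - 1) (by linarith)
  rw [add_sub_cancel] at hseries
  refine lt_of_eq_of_lt ?_ (lt_hasSum hseries 0 (fun k _ => by positivity) 1 one_ne_zero
    (by positivity))
  rw [show t - 1 + 2 = t + 1 by ring]
  simp [mul_div_assoc]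

lemma logMean_lt_of_lt {a b : ℝ} (ha : 0 < a) (hab : a < b) : logMean a b < (a + b) / 2 := by
  have hb : 0 < b := ha.trans hab
  have hlog : 2 * (b - a) / (a + b) < log b - log a := by
    have h := two_mul_sub_one_div_add_one_lt_log ((one_lt_div ha).2 hab)
    rwa [log_div hb.ne' ha.ne', show 2 * (b / a - 1) / (b / a + 1) = 2 * (b - a) / (a + b) by
      field_simp; ring] at h
  rw [logMean, div_lt_iff₀ (sub_pos.2 (log_lt_log ha hab))]
  rw [div_lt_iff₀ (by linarith)] at hlog
  linarith

lemma logMean_lt_add_div_two {a b : ℝ} (ha : 0 < a) (hb : 0 < b) (hab : a ≠ b) :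
    logMean a b < (a + b) / 2 := by
  rcases hab.lt_or_gt with hlt | hgt
  · exact logMean_lt_of_lt ha hlt
  · rw [logMean_comm, add_comm]
    exact logMean_lt_of_lt hb hgt

/-- The mass-flux dissipation coefficient of Chandrashekar's
entropy-conservative Euler flux relative to the central flux:
`R₁ = 2(⟨ρv⟩ − ρ^ln⟨v⟩)/(ρᵢ₊₁−ρᵢ)` satisfies the identity
`R₁ = (⟨ρ⟩ − ρ^ln)·2⟨v⟩/(ρᵢ₊₁−ρᵢ) + (vᵢ₊₁−vᵢ)/2`; moreover, for constant
positive velocity `vᵢ = vᵢ₊₁ = v̄ > 0` and decreasing density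
`ρᵢ₊₁ < ρᵢ`, this coefficient is strictly negative (anti-dissipation). -/
theorem chandrashekar_mass_dissipation_coefficient
    (ρi ρip vi vip : ℝ) (hρi : 0 < ρi) (hρip : 0 < ρip) (hne : ρi ≠ ρip)
    (ρa va ρva ρln R₁ : ℝ)
    (hρa : ρa = (ρi + ρip) / 2)
    (hva : va = (vi + vip) / 2)
    (hρva : ρva = (ρi * vi + ρip * vip) / 2)
    (hρln : ρln = (ρip - ρi) / (Real.log ρip - Real.log ρi))
    (hR : R₁ = 2 * (ρva - ρln * va) / (ρip - ρi)) :
    R₁ = (ρa - ρln) * (2 * va) / (ρip - ρi) + (vip - vi) / 2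
    ∧ (∀ vb : ℝ, vi = vb → vip = vb → 0 < vb → ρip < ρi → R₁ < 0) := by
  have hΔρ : ρip - ρi ≠ 0 := sub_ne_zero.2 hne.symm
  have hidentity : R₁ = (ρa - ρln) * (2 * va) / (ρip - ρi) + (vip - vi) / 2 := by
    subst hρa hva hρva hR
    field_simp
    ring
  refine ⟨hidentity, fun vb hvi hvip hvb hdecr => ?_⟩
  have hgap : 0 < ρa - ρln := by
    rw [hρa, hρln]
    exact sub_pos.2 (logMean_lt_add_div_two hρi hρip hne)
  rw [hidentity, hva, hvi, hvip, sub_self, zero_div, add_zero]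
  exact div_neg_of_pos_of_neg (by positivity) (by linarith)
end
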